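/- arXiv:2002.03101 — 5 statements merged into one kernel-verified Lean document; each statement's English description precedes it below -/
import Mathlib

section
/- Let R be a unital ring with involution * and nontrivial symmetric idempotent e, and let Δ : R → R be a *-reverse derivable map with Δ(e) = 0. Then Δ maps R₁₁ = eRe into R₁₁, i.e. for every x with x = exe one has Δ(x) = eΔ(x)e. -/
section ReverseDerivable

variable {R : Type*} [NonUnitalSemiring R] {σ Δ : R → R}
  (hΔ : ∀ a b : R, Δ (a * b) = Δ b * σ a + σ b * Δ a) {e : R}

include hΔ

theorem map_mul_right_of_map_eq_zero (hes : σ e = e) (hΔe : Δ e = 0) (x : R) :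
    Δ (x * e) = e * Δ x := by
  rw [hΔ, hΔe, hes, zero_mul, zero_add]

theorem map_mul_left_of_map_eq_zero (hes : σ e = e) (hΔe : Δ e = 0) (x : R) :
    Δ (e * x) = Δ x * e := by
  rw [hΔ, hΔe, hes, mul_zero, add_zero]

end ReverseDerivable

theorem mul_left_eq_self_of_eq_corner {R : Type*} [Semigroup R] {e x : R} (he : e * e = e)
    (hx : x = e * x * e) : e * x = x := by
  rw [hx, ← mul_assoc, ← mul_assoc, he]

theorem mul_right_eq_self_of_eq_corner {R : Type*} [Semigroup R] {e x : R} (he : e * e = e)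
    (hx : x = e * x * e) : x * e = x := by
  rw [hx, mul_assoc, he]

theorem delta_maps_R11_to_R11_general {R : Type*} [Ring R]
    (σ : R → R)
    (e : R) (he : e * e = e) (hes : σ e = e)
    (Δ : R → R)
    (hΔ : ∀ a b : R, Δ (a * b) = Δ b * σ a + σ b * Δ a)
    (hΔe : Δ e = 0) :
    ∀ x : R, x = e * x * e → Δ x = e * Δ x * e := by
  intro x hx
  have hleft : Δ x = e * Δ x := by
    conv_lhs => rw [← mul_right_eq_self_of_eq_corner he hx]
    exact map_mul_right_of_map_eq_zero hΔ hes hΔe x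
  have hright : Δ x = Δ x * e := by
    conv_lhs => rw [← mul_left_eq_self_of_eq_corner he hx]
    exact map_mul_left_of_map_eq_zero hΔ hes hΔe x
  rw [mul_assoc, ← hright, ← hleft]

theorem delta_maps_R11_to_R11 {R : Type*} [Ring R]
    (σ : R → R)
    (hσadd : ∀ x y : R, σ (x + y) = σ x + σ y)
    (hσinv : ∀ x : R, σ (σ x) = x)
    (hσmul : ∀ x y : R, σ (x * y) = σ y * σ x)
    (e : R) (he : e * e = e) (hes : σ e = e) (he0 : e ≠ 0) (he1 : e ≠ 1)
    (Δ : R → R)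
    (hΔ : ∀ a b : R, Δ (a * b) = Δ b * σ a + σ b * Δ a)
    (hΔe : Δ e = 0) :
    ∀ x : R, x = e * x * e → Δ x = e * Δ x * e :=
  delta_maps_R11_to_R11_general σ e he hes Δ hΔ hΔe
end

section
/- Let R be a unital ring with involution * and nontrivial symmetric idempotent e, and let Δ : R → R be a *-reverse derivable map with Δ(e) = 0. Then Δ maps R₂₂ = (1−e)R(1−e) into R₂₂, i.e. for every x with x = (1−e)x(1−e) one has Δ(x) = (1−e)Δ(x)(1−e). -/
/-!
For an idempotent `e`, `x = (1 - e) x (1 - e)` just says `e x = 0 = x e`. Expanding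
`Δ (e x)` and `Δ (x e)` with `σ e = e` and `Δ e = 0` gives `Δ x · e = Δ 0 = e · Δ x`,
and `Δ 0 = Δ (0 · 0) = 0` once `σ 0 = 0`.
-/

section Corner

variable {R : Type*} [Ring R] {e : R}

theorem IsIdempotentElem.eq_one_sub_mul_mul_one_sub_iff (he : IsIdempotentElem e) (x : R) :
    x = (1 - e) * x * (1 - e) ↔ e * x = 0 ∧ x * e = 0 := by
  constructor
  · intro hx
    constructor
    · rw [hx, ← mul_assoc, ← mul_assoc, he.mul_one_sub_self, zero_mul, zero_mul]
    · rw [hx, mul_assoc, he.one_sub_mul_self, mul_zero]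
  · rintro ⟨hex, hxe⟩
    simp only [mul_sub, sub_mul, one_mul, mul_one, hex, hxe, sub_zero]

end Corner

section ReverseDerivable

variable {R : Type*} [Ring R] {σ Δ : R → R}

def IsReverseDerivable (σ Δ : R → R) : Prop :=
  ∀ a b : R, Δ (a * b) = Δ b * σ a + σ b * Δ a

namespace IsReverseDerivable

variable (hΔ : IsReverseDerivable σ Δ)
include hΔ

theorem map_zero (hσ0 : σ 0 = 0) : Δ 0 = 0 := by
  simpa [hσ0] using hΔ 0 0

variable {e : R} (hes : σ e = e) (hΔe : Δ e = 0)
include hes hΔe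

theorem mul_eq_of_mul_left_eq_zero {x : R} (hex : e * x = 0) : Δ x * e = Δ 0 := by
  simpa [hes, hΔe, hex] using (hΔ e x).symm

theorem mul_eq_of_mul_right_eq_zero {x : R} (hxe : x * e = 0) : e * Δ x = Δ 0 := by
  simpa [hes, hΔe, hxe] using (hΔ x e).symm

end IsReverseDerivable

end ReverseDerivable

theorem delta_maps_R22_to_R22_general {R : Type*} [Ring R]
    (σ : R → R)
    (hσadd : ∀ x y : R, σ (x + y) = σ x + σ y)
    (e : R) (he : e * e = e) (hes : σ e = e)
    (Δ : R → R)
    (hΔ : ∀ a b : R, Δ (a * b) = Δ b * σ a + σ b * Δ a)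
    (hΔe : Δ e = 0) :
    ∀ x : R, x = (1 - e) * x * (1 - e) → Δ x = (1 - e) * Δ x * (1 - e) := by
  intro x hx
  have hΔ0 : Δ 0 = 0 := IsReverseDerivable.map_zero hΔ (AddMonoidHom.mk' σ hσadd).map_zero
  have he' : IsIdempotentElem e := he
  obtain ⟨hex, hxe⟩ := (he'.eq_one_sub_mul_mul_one_sub_iff x).mp hx
  refine (he'.eq_one_sub_mul_mul_one_sub_iff (Δ x)).mpr ⟨?_, ?_⟩
  · rw [IsReverseDerivable.mul_eq_of_mul_right_eq_zero hΔ hes hΔe hxe, hΔ0]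
  · rw [IsReverseDerivable.mul_eq_of_mul_left_eq_zero hΔ hes hΔe hex, hΔ0]

theorem delta_maps_R22_to_R22 {R : Type*} [Ring R]
    (σ : R → R)
    (hσadd : ∀ x y : R, σ (x + y) = σ x + σ y)
    (hσinv : ∀ x : R, σ (σ x) = x)
    (hσmul : ∀ x y : R, σ (x * y) = σ y * σ x)
    (e : R) (he : e * e = e) (hes : σ e = e) (he0 : e ≠ 0) (he1 : e ≠ 1)
    (Δ : R → R)
    (hΔ : ∀ a b : R, Δ (a * b) = Δ b * σ a + σ b * Δ a)
    (hΔe : Δ e = 0) :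
    ∀ x : R, x = (1 - e) * x * (1 - e) → Δ x = (1 - e) * Δ x * (1 - e) :=
  delta_maps_R22_to_R22_general σ hσadd e he hes Δ hΔ hΔe
end

section
/- Let R be a unital ring with involution * containing a nontrivial symmetric idempotent e, satisfying: (M1) xR = 0 implies x = 0. Let Δ : R → R be a *-reverse derivable map with Δ(e) = 0. Then for all x₁₁ ∈ eRe and x₂₁ ∈ (1−e)Re, Δ(x₁₁ + x₂₁) = Δ(x₁₁) + Δ(x₂₁). -/
/-!
Since `σ e = e` and `Δ e = 0`, the derivation rule gives `Δ (e * x) = Δ x * e`; the same holds for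
the complementary projection `1 - e` once one checks `Δ (1 - e) = 0`. Adding the two identities gives
`Δ x = Δ (e * x) + Δ ((1 - e) * x)`, and for `x = x₁₁ + x₂₁` the two summands are `Δ x₁₁` and `Δ x₂₁`.
-/

section Involution

variable {R : Type*} [Ring R] {σ : R → R}

lemma map_one_of_involutive_of_antimul (hσinv : ∀ x, σ (σ x) = x)
    (hσmul : ∀ x y, σ (x * y) = σ y * σ x) : σ 1 = 1 := by
  simpa [hσinv] using (hσmul (σ 1) 1).symm

lemma map_one_sub_of_involutive_of_antimul (hσadd : ∀ x y, σ (x + y) = σ x + σ y)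
    (hσinv : ∀ x, σ (σ x) = x) (hσmul : ∀ x y, σ (x * y) = σ y * σ x) {e : R} (hes : σ e = e) :
    σ (1 - e) = 1 - e := by
  have h : σ (1 - e) = σ 1 - σ e := eq_sub_of_add_eq (by rw [← hσadd, sub_add_cancel])
  rw [h, map_one_of_involutive_of_antimul hσinv hσmul, hes]

end Involution

section ReverseDerivable

variable {R : Type*} [Ring R] {σ Δ : R → R} (hΔ : ∀ a b, Δ (a * b) = Δ b * σ a + σ b * Δ a)
include hΔ

lemma reverseDerivable_zero (hσ0 : σ 0 = 0) : Δ 0 = 0 := by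
  simpa [hσ0] using hΔ 0 0

lemma reverseDerivable_mul_left {p : R} (hps : σ p = p) (hΔp : Δ p = 0) (x : R) :
    Δ (p * x) = Δ x * p := by
  rw [hΔ, hps, hΔp, mul_zero, add_zero]

lemma reverseDerivable_one_sub {e : R} (he : IsIdempotentElem e) (hes : σ e = e)
    (hfs : σ (1 - e) = 1 - e) (hΔ0 : Δ 0 = 0) (hΔe : Δ e = 0) : Δ (1 - e) = 0 := by
  have hΔf_e : Δ (1 - e) * e = 0 := by
    simpa [hΔe, hΔ0, hes, he.mul_one_sub_self] using (hΔ e (1 - e)).symm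
  have he_Δf : e * Δ (1 - e) = 0 := by
    simpa [hΔe, hΔ0, hes, hfs, he.one_sub_mul_self] using (hΔ (1 - e) e).symm
  have hΔf_f : Δ (1 - e) * (1 - e) = Δ (1 - e) := by
    rw [mul_sub, mul_one, hΔf_e, sub_zero]
  have hf_Δf : (1 - e) * Δ (1 - e) = 0 := by
    have h := hΔ (1 - e) (1 - e)
    rw [he.one_sub.eq, hfs, hΔf_f] at h
    exact left_eq_add.mp h
  calc Δ (1 - e) = e * Δ (1 - e) + (1 - e) * Δ (1 - e) := by noncomm_ring
    _ = 0 := by rw [he_Δf, hf_Δf, add_zero]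

end ReverseDerivable

theorem delta_additive_R11_R21_general {R : Type*} [Ring R]
    (σ : R → R)
    (hσadd : ∀ x y : R, σ (x + y) = σ x + σ y)
    (hσinv : ∀ x : R, σ (σ x) = x)
    (hσmul : ∀ x y : R, σ (x * y) = σ y * σ x)
    (e : R) (he : e * e = e) (hes : σ e = e)
    (Δ : R → R)
    (hΔ : ∀ a b : R, Δ (a * b) = Δ b * σ a + σ b * Δ a)
    (hΔe : Δ e = 0) :
    ∀ x₁₁ x₂₁ : R, x₁₁ = e * x₁₁ * e → x₂₁ = (1 - e) * x₂₁ * e →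
      Δ (x₁₁ + x₂₁) = Δ x₁₁ + Δ x₂₁ := by
  intro x₁₁ x₂₁ h₁₁ h₂₁
  have he : IsIdempotentElem e := he
  have hfs := map_one_sub_of_involutive_of_antimul hσadd hσinv hσmul hes
  have hΔ0 := reverseDerivable_zero hΔ (AddMonoidHom.mk' σ hσadd).map_zero
  have hΔf := reverseDerivable_one_sub hΔ he hes hfs hΔ0 hΔe
  have hpeirce_e : e * (x₁₁ + x₂₁) = x₁₁ := by
    rw [h₁₁, h₂₁]
    simp only [mul_add, ← mul_assoc, he.eq, he.mul_one_sub_self, zero_mul, add_zero]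
  have hpeirce_f : (1 - e) * (x₁₁ + x₂₁) = x₂₁ := by
    rw [h₁₁, h₂₁]
    simp only [mul_add, ← mul_assoc, he.one_sub.eq, he.one_sub_mul_self, zero_mul, zero_add]
  calc Δ (x₁₁ + x₂₁) = Δ (x₁₁ + x₂₁) * e + Δ (x₁₁ + x₂₁) * (1 - e) := by noncomm_ring
    _ = Δ x₁₁ + Δ x₂₁ := by
      rw [← reverseDerivable_mul_left hΔ hes hΔe, ← reverseDerivable_mul_left hΔ hfs hΔf,
        hpeirce_e, hpeirce_f]

theorem delta_additive_R11_R21 {R : Type*} [Ring R]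
    (σ : R → R)
    (hσadd : ∀ x y : R, σ (x + y) = σ x + σ y)
    (hσinv : ∀ x : R, σ (σ x) = x)
    (hσmul : ∀ x y : R, σ (x * y) = σ y * σ x)
    (e : R) (he : e * e = e) (hes : σ e = e) (he0 : e ≠ 0) (he1 : e ≠ 1)
    (hM1 : ∀ x : R, (∀ r : R, x * r = 0) → x = 0)
    (Δ : R → R)
    (hΔ : ∀ a b : R, Δ (a * b) = Δ b * σ a + σ b * Δ a)
    (hΔe : Δ e = 0) :
    ∀ x₁₁ x₂₁ : R, x₁₁ = e * x₁₁ * e → x₂₁ = (1 - e) * x₂₁ * e →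
      Δ (x₁₁ + x₂₁) = Δ x₁₁ + Δ x₂₁ :=
  delta_additive_R11_R21_general σ hσadd hσinv hσmul e he hes Δ hΔ hΔe
end

section
/- Let R be a unital ring with involution * containing a nontrivial symmetric idempotent e, satisfying: (M2) eRx = 0 implies x = 0. Let Δ : R → R be a *-reverse derivable map with Δ(e) = 0. Then Δ is additive on eR(1−e): for all x₁₂, y₁₂ ∈ eR(1−e), Δ(x₁₂ + y₁₂) = Δ(x₁₂) + Δ(y₁₂). -/
/-!
Write `u = x + (1 - e)`, an idempotent, so that `x + y = (e + y) * u`. Expanding `Δ` on this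
product, `Δ (e + y) = Δ y` and the identities `Δ u * e = Δ x`, `Δ u * y* = 0`, the latter obtained
by expanding `Δ (u * u) = Δ u`, leave exactly `Δ x + Δ y`.
-/

section

variable {R : Type*}

def peirce₁₂ [Ring R] (e : R) : Set R := {x | x = e * x * (1 - e)}

def IsStarReverseDerivable [Mul R] [Add R] [Star R] (Δ : R → R) : Prop :=
  ∀ a b : R, Δ (a * b) = Δ b * star a + star b * Δ a

theorem mul_eq_zero_of_mul_eq_self_of_mul_eq_zero [SemigroupWithZero R] {a b e : R}
    (ha : a * e = a) (hb : e * b = 0) : a * b = 0 := by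
  rw [← ha, mul_assoc, hb, mul_zero]

section Peirce

variable [Ring R] {e x y : R}

theorem IsIdempotentElem.self_mul_of_mem_peirce₁₂ (he : IsIdempotentElem e)
    (hx : x ∈ peirce₁₂ e) : e * x = x := by
  rw [hx, ← mul_assoc, ← mul_assoc, he.eq, ← hx]

theorem IsIdempotentElem.mul_self_of_mem_peirce₁₂ (he : IsIdempotentElem e)
    (hx : x ∈ peirce₁₂ e) : x * e = 0 := by
  rw [hx, mul_assoc, he.one_sub_mul_self, mul_zero]

theorem IsIdempotentElem.mul_one_sub_of_mem_peirce₁₂ (he : IsIdempotentElem e)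
    (hx : x ∈ peirce₁₂ e) : x * (1 - e) = x := by
  rw [mul_sub, mul_one, he.mul_self_of_mem_peirce₁₂ hx, sub_zero]

theorem IsIdempotentElem.one_sub_mul_of_mem_peirce₁₂ (he : IsIdempotentElem e)
    (hx : x ∈ peirce₁₂ e) : (1 - e) * x = 0 := by
  rw [sub_mul, one_mul, he.self_mul_of_mem_peirce₁₂ hx, sub_self]

theorem IsIdempotentElem.mul_eq_zero_of_mem_peirce₁₂ (he : IsIdempotentElem e)
    (hx : x ∈ peirce₁₂ e) (hy : y ∈ peirce₁₂ e) : x * y = 0 := by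
  rw [← he.self_mul_of_mem_peirce₁₂ hy, ← mul_assoc, he.mul_self_of_mem_peirce₁₂ hx, zero_mul]

theorem IsIdempotentElem.add_one_sub (he : IsIdempotentElem e) (hx : x ∈ peirce₁₂ e) :
    IsIdempotentElem (x + (1 - e)) := by
  rw [IsIdempotentElem, mul_add, add_mul, add_mul, he.mul_eq_zero_of_mem_peirce₁₂ hx hx,
    he.one_sub_mul_of_mem_peirce₁₂ hx, he.mul_one_sub_of_mem_peirce₁₂ hx, he.one_sub.eq,
    zero_add, zero_add]

theorem IsIdempotentElem.add_mul_add_one_sub (he : IsIdempotentElem e) (hx : x ∈ peirce₁₂ e)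
    (hy : y ∈ peirce₁₂ e) : (e + y) * (x + (1 - e)) = x + y := by
  rw [mul_add, add_mul, add_mul, he.self_mul_of_mem_peirce₁₂ hx,
    he.mul_eq_zero_of_mem_peirce₁₂ hy hx, add_zero, he.mul_one_sub_self,
    he.mul_one_sub_of_mem_peirce₁₂ hy, zero_add]

variable [StarRing R]

theorem IsStarProjection.self_mul_star_of_mem_peirce₁₂ (he : IsStarProjection e)
    (hx : x ∈ peirce₁₂ e) : e * star x = 0 := by
  simpa [he.isSelfAdjoint.star_eq] using
    congr(star $(he.isIdempotentElem.mul_self_of_mem_peirce₁₂ hx))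

theorem IsStarProjection.star_mul_self_of_mem_peirce₁₂ (he : IsStarProjection e)
    (hx : x ∈ peirce₁₂ e) : star x * e = star x := by
  have h := congr(star $(he.isIdempotentElem.one_sub_mul_of_mem_peirce₁₂ hx))
  rw [star_mul, he.one_sub.isSelfAdjoint.star_eq, star_zero, mul_sub, mul_one, sub_eq_zero] at h
  exact h.symm

end Peirce

namespace IsStarReverseDerivable

variable [Ring R] [StarRing R] {Δ : R → R} {e x y : R}

theorem map_zero (hΔ : IsStarReverseDerivable Δ) : Δ 0 = 0 := by
  simpa using hΔ 0 0

theorem map_one_sub (hΔ : IsStarReverseDerivable Δ) (he : IsStarProjection e) (hΔe : Δ e = 0) :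
    Δ (1 - e) = 0 := by
  have hf := he.one_sub
  have hfe : Δ (1 - e) * e = 0 := by
    simpa [he.mul_one_sub_self, hΔ.map_zero, he.isSelfAdjoint.star_eq, hΔe] using
      (hΔ e (1 - e)).symm
  have hef : e * Δ (1 - e) = 0 := by
    simpa [he.one_sub_mul_self, hΔ.map_zero, he.isSelfAdjoint.star_eq, hΔe] using
      (hΔ (1 - e) e).symm
  have h := hΔ (1 - e) (1 - e)
  rw [hf.isIdempotentElem.eq, hf.isSelfAdjoint.star_eq, mul_sub, mul_one, hfe, sub_zero, sub_mul,
    one_mul, hef, sub_zero] at h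
  exact right_eq_add.mp h

theorem map_mul_self_of_mem_peirce₁₂ (hΔ : IsStarReverseDerivable Δ) (he : IsStarProjection e)
    (hΔe : Δ e = 0) (hx : x ∈ peirce₁₂ e) : Δ x * e = Δ x := by
  have h := hΔ e x
  rw [he.isIdempotentElem.self_mul_of_mem_peirce₁₂ hx, he.isSelfAdjoint.star_eq, hΔe, mul_zero,
    add_zero] at h
  exact h.symm

theorem self_mul_map_of_mem_peirce₁₂ (hΔ : IsStarReverseDerivable Δ) (he : IsStarProjection e)
    (hΔe : Δ e = 0) (hx : x ∈ peirce₁₂ e) : e * Δ x = 0 := by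
  have h := hΔ x (1 - e)
  rw [he.isIdempotentElem.mul_one_sub_of_mem_peirce₁₂ hx, hΔ.map_one_sub he hΔe, zero_mul, zero_add,
    he.one_sub.isSelfAdjoint.star_eq, sub_mul, one_mul] at h
  exact sub_eq_self.mp h.symm

theorem map_self_add_of_mem_peirce₁₂ (hΔ : IsStarReverseDerivable Δ) (he : IsStarProjection e)
    (hΔe : Δ e = 0) (hx : x ∈ peirce₁₂ e) : Δ (e + x) = Δ x := by
  have hmul : e * Δ (e + x) = 0 := by
    have h := hΔ (e + x) e
    rw [add_mul, he.isIdempotentElem.eq, he.isIdempotentElem.mul_self_of_mem_peirce₁₂ hx,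
      add_zero, hΔe, zero_mul, zero_add, he.isSelfAdjoint.star_eq] at h
    exact h.symm
  have h := hΔ (e + x) (1 - e)
  rw [add_mul, he.mul_one_sub_self, he.isIdempotentElem.mul_one_sub_of_mem_peirce₁₂ hx, zero_add,
    hΔ.map_one_sub he hΔe, zero_mul, zero_add, he.one_sub.isSelfAdjoint.star_eq, sub_mul, one_mul,
    hmul, sub_zero] at h
  exact h.symm

theorem map_add_one_sub_mul_self (hΔ : IsStarReverseDerivable Δ) (he : IsStarProjection e)
    (hΔe : Δ e = 0) (hx : x ∈ peirce₁₂ e) : Δ (x + (1 - e)) * e = Δ x := by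
  have h := hΔ e (x + (1 - e))
  rw [mul_add, he.isIdempotentElem.self_mul_of_mem_peirce₁₂ hx, he.mul_one_sub_self, add_zero,
    he.isSelfAdjoint.star_eq, hΔe, mul_zero, add_zero] at h
  exact h.symm

theorem self_mul_map_add_one_sub (hΔ : IsStarReverseDerivable Δ) (he : IsStarProjection e)
    (hΔe : Δ e = 0) (hx : x ∈ peirce₁₂ e) : e * Δ (x + (1 - e)) = 0 := by
  have h := hΔ (x + (1 - e)) e
  rw [add_mul, he.isIdempotentElem.mul_self_of_mem_peirce₁₂ hx, he.one_sub_mul_self, add_zero,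
    hΔ.map_zero, hΔe, zero_mul, zero_add, he.isSelfAdjoint.star_eq] at h
  exact h.symm

theorem map_add_one_sub_mul_star (hΔ : IsStarReverseDerivable Δ) (he : IsStarProjection e)
    (hΔe : Δ e = 0) (hx : x ∈ peirce₁₂ e) (hy : y ∈ peirce₁₂ e) :
    Δ (x + (1 - e)) * star y = 0 := by
  set p := Δ (x + (1 - e))
  have hsy := he.self_mul_star_of_mem_peirce₁₂ hy
  have hp : p = p * star x + (p - Δ x) + p := by
    have h := hΔ (x + (1 - e)) (x + (1 - e))
    rwa [(he.isIdempotentElem.add_one_sub hx).eq, star_add, he.one_sub.isSelfAdjoint.star_eq,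
      mul_add, mul_sub, mul_one, hΔ.map_add_one_sub_mul_self he hΔe hx, add_mul, sub_mul, one_mul,
      mul_eq_zero_of_mul_eq_self_of_mul_eq_zero (he.star_mul_self_of_mem_peirce₁₂ hx)
        (hΔ.self_mul_map_add_one_sub he hΔe hx), hΔ.self_mul_map_add_one_sub he hΔe hx, zero_add,
      sub_zero] at h
  have h : p * star y = p * star y + p * star y := by
    calc p * star y = (p * star x + (p - Δ x) + p) * star y := by rw [← hp]
      _ = p * star y + p * star y := by
        rw [add_mul, add_mul, sub_mul, mul_assoc,
          mul_eq_zero_of_mul_eq_self_of_mul_eq_zero (he.star_mul_self_of_mem_peirce₁₂ hx) hsy,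
          mul_eq_zero_of_mul_eq_self_of_mul_eq_zero (hΔ.map_mul_self_of_mem_peirce₁₂ he hΔe hx) hsy,
          mul_zero, sub_zero, zero_add]
  exact right_eq_add.mp h

theorem map_add_of_mem_peirce₁₂ (hΔ : IsStarReverseDerivable Δ) (he : IsStarProjection e)
    (hΔe : Δ e = 0) (hx : x ∈ peirce₁₂ e) (hy : y ∈ peirce₁₂ e) :
    Δ (x + y) = Δ x + Δ y := by
  have hey := hΔ.self_mul_map_of_mem_peirce₁₂ he hΔe hy
  calc Δ (x + y) = Δ ((e + y) * (x + (1 - e))) := by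
        rw [he.isIdempotentElem.add_mul_add_one_sub hx hy]
    _ = Δ (x + (1 - e)) * (e + star y) + (star x + (1 - e)) * Δ y := by
        rw [hΔ, star_add, star_add, he.isSelfAdjoint.star_eq, he.one_sub.isSelfAdjoint.star_eq,
          hΔ.map_self_add_of_mem_peirce₁₂ he hΔe hy]
    _ = Δ x + Δ y := by
        rw [mul_add, hΔ.map_add_one_sub_mul_self he hΔe hx,
          hΔ.map_add_one_sub_mul_star he hΔe hx hy, add_mul, sub_mul, one_mul, hey, sub_zero,
          add_zero, mul_eq_zero_of_mul_eq_self_of_mul_eq_zero (he.star_mul_self_of_mem_peirce₁₂ hx)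
            hey, zero_add]

end IsStarReverseDerivable

end

theorem delta_additive_on_R12_general {R : Type*} [Ring R]
    (σ : R → R)
    (hσadd : ∀ x y : R, σ (x + y) = σ x + σ y)
    (hσinv : ∀ x : R, σ (σ x) = x)
    (hσmul : ∀ x y : R, σ (x * y) = σ y * σ x)
    (e : R) (he : e * e = e) (hes : σ e = e)
    (Δ : R → R)
    (hΔ : ∀ a b : R, Δ (a * b) = Δ b * σ a + σ b * Δ a)
    (hΔe : Δ e = 0) :
    ∀ x₁₂ y₁₂ : R, x₁₂ = e * x₁₂ * (1 - e) → y₁₂ = e * y₁₂ * (1 - e) →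
      Δ (x₁₂ + y₁₂) = Δ x₁₂ + Δ y₁₂ := by
  let _ : StarRing R :=
    { star := σ, star_involutive := hσinv, star_mul := hσmul, star_add := hσadd }
  intro x y hx hy
  exact IsStarReverseDerivable.map_add_of_mem_peirce₁₂ hΔ ⟨he, hes⟩ hΔe hx hy

theorem delta_additive_on_R12 {R : Type*} [Ring R]
    (σ : R → R)
    (hσadd : ∀ x y : R, σ (x + y) = σ x + σ y)
    (hσinv : ∀ x : R, σ (σ x) = x)
    (hσmul : ∀ x y : R, σ (x * y) = σ y * σ x)
    (e : R) (he : e * e = e) (hes : σ e = e) (he0 : e ≠ 0) (he1 : e ≠ 1)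
    (hM2 : ∀ x : R, (∀ r : R, e * r * x = 0) → x = 0)
    (Δ : R → R)
    (hΔ : ∀ a b : R, Δ (a * b) = Δ b * σ a + σ b * Δ a)
    (hΔe : Δ e = 0) :
    ∀ x₁₂ y₁₂ : R, x₁₂ = e * x₁₂ * (1 - e) → y₁₂ = e * y₁₂ * (1 - e) →
      Δ (x₁₂ + y₁₂) = Δ x₁₂ + Δ y₁₂ :=
  delta_additive_on_R12_general σ hσadd hσinv hσmul e he hes Δ hΔ hΔe
end

section
/- Let R be a prime unital ring with involution * containing a nontrivial symmetric idempotent e. Then every *-reverse derivable map δ : R → R is additive. -/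
/-!
Composing with the involution turns a *-reverse derivable map `δ` into a multiplicative
derivation `d = δ ∘ σ`, i.e. `d (a * b) = d a * b + a * d b`, with no additivity assumed.
For such a `d` the defect `D = d (x + y) - d x - d y` satisfies `r * D = 0` when `r * y = 0`
and `D * r = 0` when `y * r = 0`. With `f = 1 - e` this gives additivity on pairs that
`e` separates, and the factorisation `(e + b) * (f + a) = a + b` for `e * a = a`, `b * e = 0`
then gives `d (a + b) = d a + d b`. Multiplying a defect on the right by `r * f` produces a
defect of this separated kind, so `D * R * f = 0`; primeness forces `D = 0` whenever
`e * x = x`, and symmetrically whenever `f * x = x`. The Peirce splitting `x = e * x + f * x`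
finishes the proof.
-/

def IsMultiplicativeDerivation {R : Type*} [Ring R] (d : R → R) : Prop :=
  ∀ a b : R, d (a * b) = d a * b + a * d b

namespace IsMultiplicativeDerivation

variable {R : Type*} [Ring R] {d : R → R}

theorem map_zero (hd : IsMultiplicativeDerivation d) : d 0 = 0 := by
  simpa using hd 0 0

theorem leibniz_eq_zero_of_mul_eq_zero (hd : IsMultiplicativeDerivation d) {u v : R}
    (h : u * v = 0) : d u * v + u * d v = 0 := by
  rw [← hd, h, hd.map_zero]

theorem mul_map_add_sub_eq_zero (hd : IsMultiplicativeDerivation d) {r : R} (x : R) {y : R}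
    (h : r * y = 0) : r * (d (x + y) - d x - d y) = 0 := by
  have hx := hd r (x + y)
  rw [mul_add, h, add_zero, hd r x] at hx
  linear_combination (norm := noncomm_ring) -hx - hd.leibniz_eq_zero_of_mul_eq_zero h

theorem map_add_sub_mul_eq_zero (hd : IsMultiplicativeDerivation d) {r : R} (x : R) {y : R}
    (h : y * r = 0) : (d (x + y) - d x - d y) * r = 0 := by
  have hx := hd (x + y) r
  rw [add_mul, h, add_zero, hd x r] at hx
  linear_combination (norm := noncomm_ring) -hx - hd.leibniz_eq_zero_of_mul_eq_zero h

theorem map_add_sub_mul (hd : IsMultiplicativeDerivation d) (x y z : R) :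
    (d (x + y) - d x - d y) * z = d (x * z + y * z) - d (x * z) - d (y * z) := by
  rw [← add_mul, hd, hd x, hd y]
  noncomm_ring

theorem map_add_of_mul_eq_zero_left (hd : IsMultiplicativeDerivation d) (e : R) {x y : R}
    (hy : e * y = 0) (hx : (1 - e) * x = 0) : d (x + y) = d x + d y := by
  have he := hd.mul_map_add_sub_eq_zero x hy
  have hf := hd.mul_map_add_sub_eq_zero y hx
  rw [add_comm y x, sub_right_comm] at hf
  rw [← sub_eq_zero, ← sub_sub]
  linear_combination (norm := noncomm_ring) he + hf

theorem map_add_of_mul_eq_zero_right (hd : IsMultiplicativeDerivation d) (e : R) {x y : R}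
    (hy : y * e = 0) (hx : x * (1 - e) = 0) : d (x + y) = d x + d y := by
  have he := hd.map_add_sub_mul_eq_zero x hy
  have hf := hd.map_add_sub_mul_eq_zero y hx
  rw [add_comm y x, sub_right_comm] at hf
  rw [← sub_eq_zero, ← sub_sub]
  linear_combination (norm := noncomm_ring) he + hf

variable {e : R}

theorem map_add_of_mul_left_eq_self_of_mul_right_eq_zero (hd : IsMultiplicativeDerivation d)
    (he : IsIdempotentElem e) {a b : R} (ha : e * a = a) (hb : b * e = 0) :
    d (a + b) = d a + d b := by
  have hfa : (1 - e) * a = 0 := by rw [sub_mul, one_mul, ha, sub_self]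
  have hbf : b * (1 - e) = b := by rw [mul_sub, mul_one, hb, sub_zero]
  have hba : b * a = 0 := by rw [← ha, ← mul_assoc, hb, zero_mul]
  have hfactor : (e + b) * ((1 - e) + a) = a + b := by
    rw [add_mul, mul_add, mul_add, he.mul_one_sub_self, ha, hbf, hba]
    abel
  have heb : d (e + b) = d e + d b := hd.map_add_of_mul_eq_zero_right e hb he.mul_one_sub_self
  have hfa' : d ((1 - e) + a) = d (1 - e) + d a := by
    rw [add_comm, hd.map_add_of_mul_eq_zero_left e he.mul_one_sub_self hfa, add_comm]
  have hprod := hd (e + b) ((1 - e) + a)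
  rw [hfactor, heb, hfa'] at hprod
  rw [hprod]
  have hea := hd e a
  have hbf' := hd b (1 - e)
  rw [ha] at hea
  rw [hbf] at hbf'
  linear_combination (norm := noncomm_ring)
    hd.leibniz_eq_zero_of_mul_eq_zero he.mul_one_sub_self - hea - hbf' +
      hd.leibniz_eq_zero_of_mul_eq_zero hba

theorem map_add_of_mul_left_eq_self (hd : IsMultiplicativeDerivation d) (he : IsIdempotentElem e)
    (hprime : ∀ s : R, (∀ r : R, s * r * (1 - e) = 0) → s = 0) {x : R} (hx : e * x = x) (y : R) :
    d (x + y) = d x + d y := by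
  rw [← sub_eq_zero, ← sub_sub]
  refine hprime _ fun r => ?_
  -- `x * r * (1 - e)` lies in `e * R` and `y * r * (1 - e)` is killed by `e` on the right.
  rw [mul_assoc, hd.map_add_sub_mul, ← mul_assoc x, ← mul_assoc y, sub_sub, sub_eq_zero]
  refine hd.map_add_of_mul_left_eq_self_of_mul_right_eq_zero he ?_ ?_
  · rw [← mul_assoc, ← mul_assoc, hx]
  · rw [mul_assoc, he.one_sub_mul_self, mul_zero]

theorem map_add (hd : IsMultiplicativeDerivation d) (he : IsIdempotentElem e)
    (hprime_e : ∀ s : R, (∀ r : R, s * r * e = 0) → s = 0)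
    (hprime_f : ∀ s : R, (∀ r : R, s * r * (1 - e) = 0) → s = 0) (x y : R) :
    d (x + y) = d x + d y := by
  have hE : ∀ z w : R, d (e * z + w) = d (e * z) + d w := fun z w =>
    hd.map_add_of_mul_left_eq_self he hprime_f (by rw [← mul_assoc, he.eq]) w
  have hF : ∀ z w : R, d ((1 - e) * z + w) = d ((1 - e) * z) + d w := fun z w =>
    hd.map_add_of_mul_left_eq_self he.one_sub (by rwa [sub_sub_cancel])
      (by rw [← mul_assoc, he.one_sub.eq]) w
  have hsplit : ∀ z : R, z = e * z + (1 - e) * z := fun z => by noncomm_ring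
  rw [hsplit x, add_assoc, hE, hF, hE, add_assoc]

end IsMultiplicativeDerivation

theorem isMultiplicativeDerivation_comp_of_antimultiplicative_involutive {R : Type*} [Ring R]
    {σ δ : R → R} (hσinv : ∀ x : R, σ (σ x) = x) (hσmul : ∀ x y : R, σ (x * y) = σ y * σ x)
    (hδ : ∀ a b : R, δ (a * b) = δ b * σ a + σ b * δ a) :
    IsMultiplicativeDerivation fun z => δ (σ z) := fun a b => by
  simp only [hσmul, hδ, hσinv]

theorem star_reverse_derivable_map_additive_of_prime_general {R : Type*} [Ring R]
    (hprime : ∀ a b : R, (∀ r : R, a * r * b = 0) → a = 0 ∨ b = 0)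
    (σ : R → R)
    (hσadd : ∀ x y : R, σ (x + y) = σ x + σ y)
    (hσinv : ∀ x : R, σ (σ x) = x)
    (hσmul : ∀ x y : R, σ (x * y) = σ y * σ x)
    (e : R) (he : e * e = e) (he0 : e ≠ 0) (he1 : e ≠ 1)
    (δ : R → R)
    (hδ : ∀ a b : R, δ (a * b) = δ b * σ a + σ b * δ a) :
    ∀ x y : R, δ (x + y) = δ x + δ y := by
  intro x y
  have hd := isMultiplicativeDerivation_comp_of_antimultiplicative_involutive hσinv hσmul hδ
  have hf0 : 1 - e ≠ 0 := sub_ne_zero.mpr he1.symm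
  have hadd : δ (σ (σ x + σ y)) = δ (σ (σ x)) + δ (σ (σ y)) :=
    hd.map_add he (fun s hs => (hprime s e hs).resolve_right he0)
      (fun s hs => (hprime s (1 - e) hs).resolve_right hf0) (σ x) (σ y)
  rwa [← hσadd, hσinv, hσinv, hσinv] at hadd

theorem star_reverse_derivable_map_additive_of_prime {R : Type*} [Ring R]
    (hprime : ∀ a b : R, (∀ r : R, a * r * b = 0) → a = 0 ∨ b = 0)
    (σ : R → R)
    (hσadd : ∀ x y : R, σ (x + y) = σ x + σ y)
    (hσinv : ∀ x : R, σ (σ x) = x)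
    (hσmul : ∀ x y : R, σ (x * y) = σ y * σ x)
    (e : R) (he : e * e = e) (hes : σ e = e) (he0 : e ≠ 0) (he1 : e ≠ 1)
    (δ : R → R)
    (hδ : ∀ a b : R, δ (a * b) = δ b * σ a + σ b * δ a) :
    ∀ x y : R, δ (x + y) = δ x + δ y :=
  star_reverse_derivable_map_additive_of_prime_general hprime σ hσadd hσinv hσmul e he he0 he1 δ hδ
end
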